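/- arXiv:2510.21687 — 3 statements merged into one kernel-verified Lean document; each statement's English description precedes it below -/
import Mathlib

section
/- Let ρ ∈ (0,1) and m > 0. For every ε > 0 there exists a constant c = c(ρ,ε) > 0 such that for all r ≥ 0, ∑_{n=1}^{∞} (m r^ρ)^{n-1} / Γ(nρ) ≤ c · e^{(1+ε) m^{1/ρ} r}. -/
open Real Finset


lemma aux_two_pow_le_fact (k : ℕ) : 2 ^ k ≤ (k+1).factorial := by
  induction k with
  | zero => simp
  | succ k ih =>
    rw [pow_succ, Nat.factorial_succ]
    calc 2 ^ k * 2 ≤ (k+1).factorial * 2 := Nat.mul_le_mul_right _ ih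
      _ ≤ (k + 1 + 1) * (k+1).factorial := by
          rw [mul_comm]; exact Nat.mul_le_mul_right _ (by omega)

lemma aux_gamma_ge {x : ℝ} (hx : 3 ≤ x) : (2:ℝ) ^ (x - 3) ≤ Real.Gamma x := by
  have hx0 : (0:ℝ) ≤ x := by linarith
  set j := ⌊x⌋₊ with hj
  have hj3 : 3 ≤ j := Nat.le_floor (by exact_mod_cast hx)
  have hjle : (j:ℝ) ≤ x := Nat.floor_le hx0
  have hxlt : x < (j:ℝ) + 1 := Nat.lt_floor_add_one x
  have hmono := Real.Gamma_strictMonoOn_Ici.monotoneOn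
    (show (j:ℝ) ∈ Set.Ici (2:ℝ) by
      simp only [Set.mem_Ici]; exact_mod_cast le_trans (by norm_num) hj3)
    (show x ∈ Set.Ici (2:ℝ) by simp only [Set.mem_Ici]; linarith) hjle
  have hfact : Real.Gamma (j:ℝ) = (j-1).factorial := by
    have hj1 : j - 1 + 1 = j := by omega
    have : (j:ℝ) = ((j-1 : ℕ):ℝ) + 1 := by exact_mod_cast hj1.symm
    rw [this, Real.Gamma_nat_eq_factorial]
  have hpow : (2:ℝ) ^ (x-3) ≤ (2:ℝ) ^ (((j:ℝ)) - 2) :=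
    Real.rpow_le_rpow_of_exponent_le (by norm_num) (by linarith)
  have hnat : (2:ℝ) ^ (((j:ℝ)) - 2) = ((2 ^ (j-2) : ℕ) : ℝ) := by
    have h2 : ((j:ℝ)) - 2 = ((j - 2 : ℕ) : ℝ) := by
      have : ((j - 2 : ℕ) : ℝ) = (j:ℝ) - 2 := by
        have hj2 : 2 ≤ j := by omega
        push_cast [hj2]; ring
      linarith
    rw [h2, Real.rpow_natCast]
    push_cast; ring
  have hff : ((2 ^ (j-2) : ℕ) : ℝ) ≤ ((j-1).factorial : ℝ) := by
    exact_mod_cast (by simpa [show j - 2 + 1 = j - 1 by omega] using aux_two_pow_le_fact (j-2))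
  calc (2:ℝ) ^ (x-3) ≤ (2:ℝ) ^ (((j:ℝ)) - 2) := hpow
    _ = ((2 ^ (j-2) : ℕ) : ℝ) := hnat
    _ ≤ ((j-1).factorial : ℝ) := hff
    _ = Real.Gamma (j:ℝ) := hfact.symm
    _ ≤ Real.Gamma x := hmono

lemma aux_pow_le_fact_exp {z : ℝ} (hz : 0 ≤ z) (k : ℕ) :
    z ^ k ≤ (k.factorial : ℝ) * Real.exp z := by
  have h1 : z ^ k / (k.factorial : ℝ) ≤ ∑ i ∈ range (k+1), z ^ i / i.factorial :=
    Finset.single_le_sum (f := fun i => z ^ i / (i.factorial : ℝ))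
      (fun i _ => by positivity) (self_mem_range_succ k)
  have h2 := Real.sum_le_exp_of_nonneg hz (k+1)
  have hk : (0:ℝ) < k.factorial := by exact_mod_cast k.factorial_pos
  rw [div_le_iff₀ hk] at *
  calc z ^ k ≤ (∑ i ∈ range (k+1), z ^ i / i.factorial) * k.factorial := by
        rw [← div_le_iff₀ hk] at h1 ⊢; exact h1
    _ ≤ Real.exp z * k.factorial := by
        apply mul_le_mul_of_nonneg_right h2 hk.le
    _ = k.factorial * Real.exp z := mul_comm _ _

lemma aux_term_bound {ρ ε : ℝ} (hρ0 : 0 < ρ) (hε : 0 < ε) {y : ℝ} (hy : 0 ≤ y) (n : ℕ) :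
    y ^ ((n:ℝ) * ρ) ≤
      (1 + (Nat.ceil ((n:ℝ)*ρ)).factorial * ((1+ε)⁻¹) ^ (Nat.ceil ((n:ℝ)*ρ))) *
        Real.exp ((1+ε)*y) := by
  set k := Nat.ceil ((n:ℝ)*ρ) with hk
  have hε1 : (0:ℝ) < 1 + ε := by linarith
  have hexp1 : (1:ℝ) ≤ Real.exp ((1+ε)*y) := by
    rw [Real.one_le_exp_iff]; positivity
  have hkf : (0:ℝ) ≤ (k.factorial : ℝ) * ((1+ε)⁻¹)^k := by positivity
  have h2 : y ^ k ≤ (k.factorial : ℝ) * ((1+ε)⁻¹)^k * Real.exp ((1+ε)*y) := by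
    have hz : 0 ≤ (1+ε)*y := by positivity
    have := aux_pow_le_fact_exp hz k
    have hyeq : y = (1+ε)⁻¹ * ((1+ε)*y) := by field_simp
    calc y ^ k = ((1+ε)⁻¹)^k * ((1+ε)*y)^k := by rw [← mul_pow, ← hyeq]
      _ ≤ ((1+ε)⁻¹)^k * ((k.factorial : ℝ) * Real.exp ((1+ε)*y)) := by
          apply mul_le_mul_of_nonneg_left this (by positivity)
      _ = (k.factorial : ℝ) * ((1+ε)⁻¹)^k * Real.exp ((1+ε)*y) := by ring
  have h1 : y ^ ((n:ℝ) * ρ) ≤ 1 + y ^ k := by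
    rcases le_or_gt y 1 with hy1 | hy1
    · have : y ^ ((n:ℝ)*ρ) ≤ 1 := Real.rpow_le_one hy hy1 (by positivity)
      have : (0:ℝ) ≤ y ^ k := by positivity
      linarith [Real.rpow_le_one hy hy1 (show (0:ℝ) ≤ (n:ℝ)*ρ by positivity)]
    · have h3 : y ^ ((n:ℝ)*ρ) ≤ y ^ ((k:ℝ)) :=
        Real.rpow_le_rpow_of_exponent_le hy1.le (Nat.le_ceil _)
      rw [Real.rpow_natCast] at h3
      linarith
  calc y ^ ((n:ℝ)*ρ) ≤ 1 + y ^ k := h1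
    _ ≤ 1 * Real.exp ((1+ε)*y) + ((k.factorial : ℝ) * ((1+ε)⁻¹)^k) * Real.exp ((1+ε)*y) := by
        rw [one_mul]
        exact add_le_add (by linarith) h2
    _ = (1 + (k.factorial : ℝ) * ((1+ε)⁻¹)^k) * Real.exp ((1+ε)*y) := by ring


lemma aux_summable {ρ ε : ℝ} (hρ0 : 0 < ρ) (hρ1 : ρ < 1) (hε : 0 < ε) :
    Summable (fun n : ℕ =>
      (1 + ((Nat.ceil ((n:ℝ)*ρ)).factorial : ℝ) * ((1+ε)⁻¹) ^ (Nat.ceil ((n:ℝ)*ρ))) /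
        Real.Gamma (((n:ℝ)+1)*ρ)) := by
  have hG : ∀ n : ℕ, 0 < Real.Gamma (((n:ℝ)+1)*ρ) := fun n =>
    Real.Gamma_pos_of_pos (mul_pos (by positivity) hρ0)
  have hε1 : (1:ℝ) < 1 + ε := by linarith
  set q : ℝ := (1+ε) ^ (-ρ) with hqdef
  have hq0 : 0 < q := Real.rpow_pos_of_pos (by linarith) _
  have hq1 : q < 1 := Real.rpow_lt_one_of_one_lt_of_neg hε1 (by linarith)
  set t : ℝ := (2:ℝ) ^ (-ρ) with htdef
  have ht0 : 0 < t := Real.rpow_pos_of_pos two_pos _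
  have ht1 : t < 1 := Real.rpow_lt_one_of_one_lt_of_neg one_lt_two (by linarith)
  -- first piece : 1 / Gamma
  have S1 : Summable (fun n : ℕ => 1 / Real.Gamma (((n:ℝ)+1)*ρ)) := by
    set N := Nat.ceil (3/ρ) with hN
    rw [← summable_nat_add_iff N]
    have hgeo : Summable (fun n : ℕ => 8 * t ^ n) :=
      (summable_geometric_of_lt_one ht0.le ht1).mul_left 8
    refine Summable.of_nonneg_of_le (fun n => by positivity) (fun n => ?_)
      ((summable_nat_add_iff N).2 hgeo)
    have hcast : ((n + N : ℕ) : ℝ) = (n:ℝ) + (N:ℝ) := by push_cast; ring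
    have hnN : 3/ρ ≤ ((n + N : ℕ) : ℝ) := by
      rw [hcast]
      have := Nat.le_ceil (3/ρ)
      have : (3/ρ : ℝ) ≤ (N:ℝ) := this
      linarith [Nat.cast_nonneg (α := ℝ) n]
    set nn : ℕ := n + N
    have h3 : 3 ≤ ((nn:ℝ)+1)*ρ := by
      have h1 : 3/ρ * ρ ≤ (nn:ℝ) * ρ := mul_le_mul_of_nonneg_right hnN hρ0.le
      rw [div_mul_cancel₀ _ hρ0.ne'] at h1
      nlinarith [Nat.cast_nonneg (α := ℝ) nn]
    have hg := aux_gamma_ge h3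
    have h4 : 1 / Real.Gamma (((nn:ℝ)+1)*ρ) ≤ (2:ℝ) ^ (3 - ((nn:ℝ)+1)*ρ) := by
      rw [show (3 - ((nn:ℝ)+1)*ρ) = -((((nn:ℝ)+1)*ρ) - 3) by ring,
        Real.rpow_neg (by norm_num), one_div]
      exact inv_anti₀ (Real.rpow_pos_of_pos two_pos _) hg
    have e1 : (2:ℝ) ^ (3 - ((nn:ℝ)+1)*ρ) = 8 * (2:ℝ) ^ (-(((nn:ℝ)+1)*ρ)) := by
      rw [show (3 - ((nn:ℝ)+1)*ρ) = 3 + (-(((nn:ℝ)+1)*ρ)) by ring,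
        Real.rpow_add two_pos]
      norm_num
    have e2 : (2:ℝ) ^ (-(((nn:ℝ)+1)*ρ)) ≤ (2:ℝ) ^ (-ρ * (nn:ℝ)) :=
      Real.rpow_le_rpow_of_exponent_le one_le_two (by nlinarith [Nat.cast_nonneg (α := ℝ) nn])
    have e3 : (2:ℝ) ^ (-ρ * (nn:ℝ)) = t ^ nn := by
      rw [htdef, ← Real.rpow_natCast ((2:ℝ) ^ (-ρ)) nn, ← Real.rpow_mul (by norm_num)]
    calc 1 / Real.Gamma (((nn:ℝ)+1)*ρ) ≤ (2:ℝ) ^ (3 - ((nn:ℝ)+1)*ρ) := h4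
      _ = 8 * (2:ℝ) ^ (-(((nn:ℝ)+1)*ρ)) := e1
      _ ≤ 8 * t ^ nn := by rw [← e3]; nlinarith [Real.rpow_pos_of_pos two_pos (-(((nn:ℝ)+1)*ρ))]
  -- second piece
  have hqpow : ∀ n : ℕ, ((1+ε)⁻¹) ^ (Nat.ceil ((n:ℝ)*ρ)) ≤ q ^ n := by
    intro n
    set k := Nat.ceil ((n:ℝ)*ρ) with hk
    have h1 : ((1+ε)⁻¹:ℝ) ^ k = (1+ε) ^ (-(k:ℝ)) := by
      rw [Real.rpow_neg (by linarith), Real.rpow_natCast]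
      exact inv_pow _ _
    have h2 : q ^ n = (1+ε) ^ (-ρ * (n:ℝ)) := by
      rw [hqdef, ← Real.rpow_natCast ((1+ε) ^ (-ρ)) n, ← Real.rpow_mul (by linarith)]
    rw [h1, h2]
    apply Real.rpow_le_rpow_of_exponent_le hε1.le
    have := Nat.le_ceil ((n:ℝ)*ρ)
    have hkk : (n:ℝ)*ρ ≤ (k:ℝ) := this
    nlinarith
  have S2 : Summable (fun n : ℕ =>
      ((Nat.ceil ((n:ℝ)*ρ)).factorial : ℝ) * ((1+ε)⁻¹) ^ (Nat.ceil ((n:ℝ)*ρ)) /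
        Real.Gamma (((n:ℝ)+1)*ρ)) := by
    have Sg : Summable (fun n : ℕ => ((n:ℝ)+2)^2 * q ^ n) := by
      have hqn : ‖q‖ < 1 := by rw [Real.norm_eq_abs, abs_of_pos hq0]; exact hq1
      have s2 := summable_pow_mul_geometric_of_norm_lt_one 2 hqn
      have s1 := summable_pow_mul_geometric_of_norm_lt_one 1 hqn
      have s0 := (summable_geometric_of_lt_one hq0.le hq1).mul_left 4
      exact ((s2.add (s1.mul_left 4)).add s0).congr (fun n => by push_cast; ring)
    rw [← summable_nat_add_iff 1]
    refine Summable.of_nonneg_of_le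
      (fun n => div_nonneg (by positivity) (hG _).le) (fun n => ?_)
      ((summable_nat_add_iff 1).2 Sg)
    set nn : ℕ := n + 1 with hnn
    -- factorial bound
    have hn1 : (1:ℝ) ≤ (nn:ℝ) := by exact_mod_cast Nat.le_add_left 1 n
    have hn0 : (0:ℝ) < (nn:ℝ)*ρ := mul_pos (by linarith) hρ0
    set k := Nat.ceil ((nn:ℝ)*ρ) with hk
    have hK1 : 1 ≤ k := Nat.ceil_pos.mpr hn0
    have hfg : ((k).factorial : ℝ) = Real.Gamma ((k:ℝ) + 1) :=
      (Real.Gamma_nat_eq_factorial k).symm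
    have hup : (k:ℝ) + 1 ≤ ((nn:ℝ)+1)*ρ + 2 := by
      have h := Nat.ceil_lt_add_one (le_of_lt hn0)
      have : (k:ℝ) < (nn:ℝ)*ρ + 1 := h
      nlinarith
    have hx0 : 0 < ((nn:ℝ)+1)*ρ := mul_pos (by linarith) hρ0
    have hmono := Real.Gamma_strictMonoOn_Ici.monotoneOn
      (show (k:ℝ)+1 ∈ Set.Ici (2:ℝ) by
        simp only [Set.mem_Ici]
        have : (1:ℝ) ≤ (k:ℝ) := by exact_mod_cast hK1
        linarith)
      (show ((nn:ℝ)+1)*ρ + 2 ∈ Set.Ici (2:ℝ) by simp only [Set.mem_Ici]; linarith) hup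
    have hgam2 : Real.Gamma (((nn:ℝ)+1)*ρ + 2)
        = (((nn:ℝ)+1)*ρ + 1) * (((nn:ℝ)+1)*ρ) * Real.Gamma (((nn:ℝ)+1)*ρ) := by
      rw [show (((nn:ℝ)+1)*ρ + 2) = (((nn:ℝ)+1)*ρ + 1) + 1 by ring,
        Real.Gamma_add_one (by positivity), Real.Gamma_add_one (ne_of_gt hx0)]
      ring
    have hfle : ((k).factorial : ℝ) ≤ ((nn:ℝ)+2)^2 * Real.Gamma (((nn:ℝ)+1)*ρ) := by
      have hxle : ((nn:ℝ)+1)*ρ ≤ (nn:ℝ)+1 := by nlinarith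
      calc ((k).factorial : ℝ) = Real.Gamma ((k:ℝ)+1) := hfg
        _ ≤ Real.Gamma (((nn:ℝ)+1)*ρ + 2) := hmono
        _ = (((nn:ℝ)+1)*ρ + 1) * (((nn:ℝ)+1)*ρ) * Real.Gamma (((nn:ℝ)+1)*ρ) := hgam2
        _ ≤ ((nn:ℝ)+2)^2 * Real.Gamma (((nn:ℝ)+1)*ρ) := by
            have h5 : (((nn:ℝ)+1)*ρ + 1) * (((nn:ℝ)+1)*ρ) ≤ ((nn:ℝ)+2)^2 := by
              have := mul_le_mul (show ((nn:ℝ)+1)*ρ + 1 ≤ (nn:ℝ)+2 by linarith)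
                (show ((nn:ℝ)+1)*ρ ≤ (nn:ℝ)+2 by linarith) hx0.le
                (by positivity : (0:ℝ) ≤ (nn:ℝ)+2)
              nlinarith [this]
            exact mul_le_mul_of_nonneg_right h5 (hG nn).le
    have hq' := hqpow nn
    rw [div_le_iff₀ (hG nn)]
    calc ((k).factorial : ℝ) * ((1+ε)⁻¹) ^ k
        ≤ (((nn:ℝ)+2)^2 * Real.Gamma (((nn:ℝ)+1)*ρ)) * q ^ nn := by
          apply mul_le_mul hfle hq' (by positivity)
          positivity
      _ = ((nn:ℝ)+2)^2 * q ^ nn * Real.Gamma (((nn:ℝ)+1)*ρ) := by ring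
  exact (S1.add S2).congr (fun n => by rw [← add_div])

/-- Mittag-Leffler type series estimate: for `ρ ∈ (0,1)`, `m > 0` and every `ε > 0`
there is `c = c(ρ,ε) > 0` with
`∑_{n≥1} (m r^ρ)^{n-1} / Γ(nρ) ≤ c e^{(1+ε) m^{1/ρ} r}` for all `r ≥ 0`. -/
theorem stmt2 (ρ m : ℝ) (hρ : ρ ∈ Set.Ioo (0:ℝ) 1) (hm : 0 < m) :
    ∀ ε > 0, ∃ c > 0, ∀ r : ℝ, 0 ≤ r →
      ∑' n : ℕ, (m * r ^ ρ) ^ n / Real.Gamma ((n + 1) * ρ) ≤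
        c * Real.exp ((1 + ε) * m ^ (1 / ρ) * r) := by
  obtain ⟨hρ0, hρ1⟩ := hρ
  intro ε hε
  have hG : ∀ n : ℕ, 0 < Real.Gamma (((n:ℝ)+1)*ρ) := fun n =>
    Real.Gamma_pos_of_pos (mul_pos (by positivity) hρ0)
  set B : ℕ → ℝ := fun n =>
    (1 + ((Nat.ceil ((n:ℝ)*ρ)).factorial : ℝ) * ((1+ε)⁻¹) ^ (Nat.ceil ((n:ℝ)*ρ))) /
      Real.Gamma (((n:ℝ)+1)*ρ) with hBdef
  have hSB : Summable B := aux_summable hρ0 hρ1 hε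
  have hB0 : ∀ n, 0 < B n := by
    intro n
    rw [hBdef]
    exact div_pos (by positivity) (hG n)
  refine ⟨∑' n, B n, Summable.tsum_pos hSB (fun n => (hB0 n).le) 0 (hB0 0), fun r hr => ?_⟩
  set y : ℝ := m ^ (1/ρ) * r with hy
  have hy0 : 0 ≤ y := mul_nonneg (Real.rpow_pos_of_pos hm _).le hr
  have hE : (1 + ε) * m ^ (1/ρ) * r = (1+ε) * y := by rw [hy]; ring
  have hxy : ∀ n : ℕ, (m * r ^ ρ) ^ n = y ^ ((n:ℝ)*ρ) := by
    intro n
    have hyρ : y ^ ρ = m * r ^ ρ := by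
      rw [hy, Real.mul_rpow (Real.rpow_nonneg hm.le _) hr, ← Real.rpow_mul hm.le,
        one_div_mul_cancel hρ0.ne', Real.rpow_one]
    rw [← hyρ, ← Real.rpow_natCast (y ^ ρ) n, ← Real.rpow_mul hy0, mul_comm ρ ((n:ℝ))]
  have hterm : ∀ n : ℕ, (m * r ^ ρ) ^ n / Real.Gamma (((n:ℝ)+1)*ρ)
      ≤ B n * Real.exp ((1 + ε) * m ^ (1 / ρ) * r) := by
    intro n
    rw [hxy n, hE, hBdef]
    have h := aux_term_bound hρ0 hε hy0 n
    calc y ^ ((n:ℝ)*ρ) / Real.Gamma (((n:ℝ)+1)*ρ)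
        ≤ ((1 + ((Nat.ceil ((n:ℝ)*ρ)).factorial : ℝ) * ((1+ε)⁻¹) ^ (Nat.ceil ((n:ℝ)*ρ))) *
            Real.exp ((1+ε)*y)) / Real.Gamma (((n:ℝ)+1)*ρ) := by
          exact (div_le_div_iff_of_pos_right (hG n)).mpr h
      _ = _ := by ring
  have hx0 : 0 ≤ m * r ^ ρ := mul_nonneg hm.le (Real.rpow_nonneg hr _)
  have hsumR : Summable (fun n => B n * Real.exp ((1 + ε) * m ^ (1 / ρ) * r)) :=
    hSB.mul_right _
  have hsumL : Summable (fun n : ℕ => (m * r ^ ρ) ^ n / Real.Gamma (((n:ℝ)+1)*ρ)) :=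
    Summable.of_nonneg_of_le (fun n => div_nonneg (pow_nonneg hx0 n) (hG n).le) hterm hsumR
  calc ∑' n : ℕ, (m * r ^ ρ) ^ n / Real.Gamma (((n:ℝ)+1)*ρ)
      ≤ ∑' n, B n * Real.exp ((1 + ε) * m ^ (1 / ρ) * r) := Summable.tsum_le_tsum hterm hsumL hsumR
    _ = (∑' n, B n) * Real.exp ((1 + ε) * m ^ (1 / ρ) * r) := tsum_mul_right
end

section
/- Let A and B be generators of bounded analytic semigroups on a Banach space E₀ with common domain E₁, satisfying uniform sectorial resolvent estimates ‖(λ-A)^{-1}‖_{L(E₀,E_j)} ≤ c₀ (1+|λ|)^{j-1} (j = 0,1) on a sector Σ_ϑ (and the same for B). Then there exists M > 0 depending only on c₀, ϑ, T such that for j ∈ {0,1} and t ∈ (0,T]: t^j ‖e^{tA} - e^{tB}‖_{L(E₀,E_j)} ≤ M ‖A - B‖_{L(E₁,E₀)}. -/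
open Set MeasureTheory

/-- `R` is the resolvent family of `A` (relative to the embedding `i : E₁ ↪ E₀`) on the
sector `Σ_ϑ`, with the sectorial estimates `(1+|z|)^{1-j} ‖(z-A)^{-1}‖_{L(E₀,E_j)} ≤ c₀`. -/
def SectorialResolvent {E₀ E₁ : Type*}
    [NormedAddCommGroup E₀] [NormedSpace ℂ E₀]
    [NormedAddCommGroup E₁] [NormedSpace ℂ E₁]
    (i : E₁ →L[ℂ] E₀) (A : E₁ →L[ℂ] E₀) (R : ℂ → E₀ →L[ℂ] E₁) (ϑ c₀ : ℝ) : Prop :=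
  ∀ z : ℂ, (z = 0 ∨ |Complex.arg z| ≤ ϑ + Real.pi / 2) →
    (z • i - A).comp (R z) = ContinuousLinearMap.id ℂ E₀ ∧
    (R z).comp (z • i - A) = ContinuousLinearMap.id ℂ E₁ ∧
    (1 + ‖z‖) * ‖i.comp (R z)‖ ≤ c₀ ∧ ‖R z‖ ≤ c₀

/-- Parametrization of the contour `Γ_t`, consisting of the two rays
`{r e^{±i(ϑ+π/2)} : r ≥ 1/t}` and the arc `{t⁻¹ e^{iφ} : |φ| ≤ ϑ + π/2}`,
run from `∞·e^{-i(ϑ+π/2)}` to `∞·e^{+i(ϑ+π/2)}`. -/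
noncomputable def contour (ϑ t u : ℝ) : ℂ :=
  if u < -(ϑ + Real.pi / 2) then
    ((t⁻¹ + (-(ϑ + Real.pi / 2) - u) : ℝ) : ℂ) * Complex.exp (((-(ϑ + Real.pi / 2) : ℝ) : ℂ) * Complex.I)
  else if u ≤ ϑ + Real.pi / 2 then ((t⁻¹ : ℝ) : ℂ) * Complex.exp ((u : ℂ) * Complex.I)
  else ((t⁻¹ + (u - (ϑ + Real.pi / 2)) : ℝ) : ℂ) * Complex.exp (((ϑ + Real.pi / 2 : ℝ) : ℂ) * Complex.I)

/-- The derivative of the contour parametrization `u ↦ contour ϑ t u`. -/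
noncomputable def contourDeriv (ϑ t u : ℝ) : ℂ :=
  if u < -(ϑ + Real.pi / 2) then -Complex.exp (((-(ϑ + Real.pi / 2) : ℝ) : ℂ) * Complex.I)
  else if u ≤ ϑ + Real.pi / 2 then Complex.I * ((t⁻¹ : ℝ) : ℂ) * Complex.exp ((u : ℂ) * Complex.I)
  else Complex.exp (((ϑ + Real.pi / 2 : ℝ) : ℂ) * Complex.I)

/-- `S₁` is the analytic semigroup generated by `A`, `E₁`-valued, given by the Dunford
contour integral `e^{tA} = (2πi)⁻¹ ∫_{Γ_t} e^{tλ} (λ - A)⁻¹ dλ` for `t ∈ (0,T]`. -/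
def IsDunfordSemigroup {E₀ E₁ : Type*}
    [NormedAddCommGroup E₀] [NormedSpace ℂ E₀]
    [NormedAddCommGroup E₁] [NormedSpace ℂ E₁] [CompleteSpace E₁]
    (R : ℂ → E₀ →L[ℂ] E₁) (S₁ : ℝ → E₀ →L[ℂ] E₁) (ϑ T : ℝ) : Prop :=
  ∀ t ∈ Set.Ioc (0:ℝ) T, ∀ x : E₀,
    S₁ t x = (2 * (Real.pi : ℂ) * Complex.I)⁻¹ •
      ∫ u : ℝ, (Complex.exp ((t : ℂ) * contour ϑ t u) * contourDeriv ϑ t u) •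
        R (contour ϑ t u) x

/-!
The second resolvent identity `(λ - A)⁻¹ - (λ - B)⁻¹ = (λ - A)⁻¹ (A - B) (λ - B)⁻¹` and the
sectorial estimates bound the difference of the resolvents on `Γ_t` by `c₀² ‖A - B‖` in
`L(E₀, E₁)`, and by `c₀² ‖A - B‖ / (1 + |λ|) ≤ t c₀² ‖A - B‖` in `L(E₀)`, since `|λ| ≥ 1/t` on
`Γ_t`. Subtracting the two Dunford integrals, it remains to see that
`∫_{Γ_t} |e^{tλ}| |dλ| ≤ C(ϑ) / t`: the arc has length `O(1/t)` and `|e^{tλ}| ≤ e` on it, while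
`|e^{tλ}| = e^{-t |λ| sin ϑ}` on the rays.
-/

open Real

open Complex in
lemma norm_exp_mul_ofReal_mul_exp_mul_I (t r φ : ℝ) :
    ‖exp (t * (r * exp (φ * I)))‖ = Real.exp (t * r * Real.cos φ) := by
  rw [norm_exp]
  congr 1
  simp [exp_mul_I, mul_re, mul_im, cos_ofReal_re, sin_ofReal_re, cos_ofReal_im, sin_ofReal_im]
  ring

def closedSector (ϑ : ℝ) : Set ℂ :=
  {z | z = 0 ∨ |z.arg| ≤ ϑ + π / 2}

section Contour

variable {ϑ t : ℝ}

theorem contour_eq_polar (hθ : 0 ≤ ϑ + π / 2) (u : ℝ) :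
    contour ϑ t u = ((t⁻¹ + max (|u| - (ϑ + π / 2)) 0 : ℝ) : ℂ)
      * Complex.exp (((max (-(ϑ + π / 2)) (min u (ϑ + π / 2)) : ℝ) : ℂ) * Complex.I) := by
  unfold contour
  generalize ϑ + π / 2 = θ at hθ ⊢
  split_ifs with h₁ h₂
  · rw [abs_of_neg (by linarith), max_eq_left (by linarith),
      max_eq_left ((min_le_left u θ).trans (by linarith))]
    push_cast; ring
  · rw [min_eq_left h₂, max_eq_right (not_lt.mp h₁),
      max_eq_right (sub_nonpos.mpr (abs_le.mpr ⟨not_lt.mp h₁, h₂⟩))]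
    simp
  · push Not at h₁ h₂
    rw [abs_of_pos (by linarith), max_eq_left (by linarith), min_eq_right h₂.le,
      max_eq_right (by linarith)]

theorem continuous_contour (hθ : 0 ≤ ϑ + π / 2) : Continuous (contour ϑ t) := by
  rw [funext (contour_eq_polar (t := t) hθ)]
  fun_prop

theorem norm_contour (hθ : 0 ≤ ϑ + π / 2) (ht : 0 < t) (u : ℝ) :
    ‖contour ϑ t u‖ = t⁻¹ + max (|u| - (ϑ + π / 2)) 0 := by
  rw [contour_eq_polar hθ, norm_mul, Complex.norm_exp_ofReal_mul_I, mul_one, Complex.norm_real,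
    Real.norm_of_nonneg (by positivity)]

theorem inv_le_norm_contour (hθ : 0 ≤ ϑ + π / 2) (ht : 0 < t) (u : ℝ) :
    t⁻¹ ≤ ‖contour ϑ t u‖ := by
  rw [norm_contour hθ ht]
  exact le_add_of_nonneg_right (le_max_right _ _)

theorem contour_mem_closedSector (hθ : 0 ≤ ϑ + π / 2) (hϑ : ϑ < π / 2) (ht : 0 < t) (u : ℝ) :
    contour ϑ t u ∈ closedSector ϑ := by
  refine Or.inr ?_
  rw [contour_eq_polar hθ, Complex.exp_mul_I, Complex.arg_real_mul _ (by positivity),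
    Complex.arg_cos_add_sin_mul_I ⟨by grind, by grind⟩]
  exact abs_le.mpr ⟨le_max_left _ _, max_le (by linarith) (min_le_right _ _)⟩

theorem measurable_contourDeriv : Measurable (contourDeriv ϑ t) := by
  unfold contourDeriv
  refine Measurable.ite (measurableSet_lt measurable_id measurable_const) measurable_const
    (Measurable.ite (measurableSet_le measurable_id measurable_const) ?_ measurable_const)
  fun_prop

end Contour

theorem IntegrableOn.integrable_comp_abs {E : Type*} [NormedAddCommGroup E] {f : ℝ → E}
    (hf : IntegrableOn f (Ioi 0)) : Integrable (fun x => f |x|) := by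
  rw [← integrableOn_univ, ← Iic_union_Ioi (a := (0 : ℝ)), integrableOn_union]
  constructor
  · have hneg : IntegrableOn (fun x => f (-x)) (Iic 0) :=
      IntegrableOn.comp_neg_Iic (by simpa [integrableOn_Ici_iff_integrableOn_Ioi] using hf)
    exact hneg.congr_fun (fun x hx => by rw [abs_of_nonpos hx]) measurableSet_Iic
  · exact hf.congr_fun (fun x hx => by rw [abs_of_pos hx]) measurableSet_Ioi

noncomputable def dunfordKernel (ϑ t u : ℝ) : ℂ :=
  Complex.exp (t * contour ϑ t u) * contourDeriv ϑ t u

noncomputable def dunfordKernelMajorant (ϑ t r : ℝ) : ℝ :=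
  if r ≤ ϑ + π / 2 then Real.exp 1 * t⁻¹ else Real.exp (-(Real.sin ϑ * t) * (r - (ϑ + π / 2)))

section Kernel

variable {ϑ t : ℝ}

theorem norm_dunfordKernel_le (hϑ : ϑ ∈ Icc 0 π) (ht : 0 < t) (u : ℝ) :
    ‖dunfordKernel ϑ t u‖ ≤ dunfordKernelMajorant ϑ t |u| := by
  have hsin : 0 ≤ Real.sin ϑ := Real.sin_nonneg_of_nonneg_of_le_pi hϑ.1 hϑ.2
  have htt : t * t⁻¹ = 1 := mul_inv_cancel₀ ht.ne'
  have hθ : 0 ≤ ϑ + π / 2 := by linarith [hϑ.1, pi_pos]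
  unfold dunfordKernel contour contourDeriv dunfordKernelMajorant
  rw [norm_mul]
  rcases lt_or_ge u (-(ϑ + π / 2)) with h₁ | h₁
  · rw [if_pos h₁, if_pos h₁, abs_of_neg (by linarith), if_neg (by linarith),
      norm_exp_mul_ofReal_mul_exp_mul_I, norm_neg, Complex.norm_exp_ofReal_mul_I, mul_one,
      Real.cos_neg, Real.cos_add_pi_div_two, Real.exp_le_exp, mul_add, htt]
    nlinarith
  rcases le_or_gt u (ϑ + π / 2) with h₂ | h₂
  · rw [if_neg h₁.not_gt, if_neg h₁.not_gt, if_pos h₂, if_pos h₂, if_pos (abs_le.mpr ⟨h₁, h₂⟩),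
      norm_exp_mul_ofReal_mul_exp_mul_I, norm_mul, norm_mul, Complex.norm_I, one_mul,
      Complex.norm_exp_ofReal_mul_I, mul_one, Complex.norm_real,
      Real.norm_of_nonneg (by positivity),
      htt, one_mul]
    gcongr
    exact Real.cos_le_one u
  · rw [if_neg h₁.not_gt, if_neg h₁.not_gt, if_neg h₂.not_ge, if_neg h₂.not_ge,
      abs_of_pos (by linarith), if_neg h₂.not_ge,
      norm_exp_mul_ofReal_mul_exp_mul_I, Complex.norm_exp_ofReal_mul_I, mul_one,
      Real.cos_add_pi_div_two, Real.exp_le_exp, mul_add, htt]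
    nlinarith

theorem dunfordKernelMajorant_of_le {r : ℝ} (hr : r ≤ ϑ + π / 2) :
    dunfordKernelMajorant ϑ t r = Real.exp 1 * t⁻¹ :=
  if_pos hr

theorem dunfordKernelMajorant_of_lt {r : ℝ} (hr : ϑ + π / 2 < r) :
    dunfordKernelMajorant ϑ t r = Real.exp (-(Real.sin ϑ * t) * (r - (ϑ + π / 2))) :=
  if_neg hr.not_ge

theorem exp_neg_mul_sub_eq_mul {b θ r : ℝ} :
    Real.exp (-b * (r - θ)) = Real.exp (b * θ) * Real.exp (-b * r) := by
  rw [← Real.exp_add]; ring_nf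

theorem integrableOn_exp_neg_mul_sub_Ioi {b : ℝ} (hb : 0 < b) (θ : ℝ) :
    IntegrableOn (fun r => Real.exp (-b * (r - θ))) (Ioi θ) := by
  simp only [exp_neg_mul_sub_eq_mul]
  exact (exp_neg_integrableOn_Ioi θ hb).const_mul _

theorem integral_exp_neg_mul_sub_Ioi {b : ℝ} (hb : 0 < b) (θ : ℝ) :
    ∫ r in Ioi θ, Real.exp (-b * (r - θ)) = b⁻¹ := by
  simp only [exp_neg_mul_sub_eq_mul]
  rw [integral_const_mul, integral_exp_mul_Ioi (neg_lt_zero.mpr hb), neg_div_neg_eq,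
    ← mul_div_assoc, ← Real.exp_add, neg_mul, add_neg_cancel, Real.exp_zero, one_div]

theorem integrableOn_dunfordKernelMajorant (hϑ : ϑ ∈ Ioo 0 π) (ht : 0 < t) :
    IntegrableOn (dunfordKernelMajorant ϑ t) (Ioi 0) := by
  have hθ : 0 ≤ ϑ + π / 2 := by linarith [hϑ.1, pi_pos]
  have hst : 0 < Real.sin ϑ * t := mul_pos (Real.sin_pos_of_pos_of_lt_pi hϑ.1 hϑ.2) ht
  rw [← Ioc_union_Ioi_eq_Ioi hθ, integrableOn_union]
  exact ⟨integrableOn_const measure_Ioc_lt_top.ne |>.congr_fun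
      (fun r hr => (dunfordKernelMajorant_of_le hr.2).symm) measurableSet_Ioc,
    integrableOn_exp_neg_mul_sub_Ioi hst _ |>.congr_fun
      (fun r hr => (dunfordKernelMajorant_of_lt hr).symm) measurableSet_Ioi⟩

theorem setIntegral_dunfordKernelMajorant (hϑ : ϑ ∈ Ioo 0 π) (ht : 0 < t) :
    ∫ r in Ioi 0, dunfordKernelMajorant ϑ t r
      = (ϑ + π / 2) * Real.exp 1 * t⁻¹ + (Real.sin ϑ * t)⁻¹ := by
  have hθ : 0 ≤ ϑ + π / 2 := by linarith [hϑ.1, pi_pos]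
  have hst : 0 < Real.sin ϑ * t := mul_pos (Real.sin_pos_of_pos_of_lt_pi hϑ.1 hϑ.2) ht
  have hint := integrableOn_dunfordKernelMajorant hϑ ht
  rw [← Ioc_union_Ioi_eq_Ioi hθ] at hint ⊢
  rw [setIntegral_union Ioc_disjoint_Ioi_same measurableSet_Ioi
      (hint.mono_set subset_union_left) (hint.mono_set subset_union_right),
    setIntegral_congr_fun measurableSet_Ioc (fun r hr => dunfordKernelMajorant_of_le hr.2),
    setIntegral_congr_fun measurableSet_Ioi (fun r hr => dunfordKernelMajorant_of_lt hr),
    setIntegral_const, integral_exp_neg_mul_sub_Ioi hst, Real.volume_real_Ioc_of_le hθ,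
    smul_eq_mul, sub_zero, mul_assoc]

end Kernel

noncomputable def dunfordConst (ϑ : ℝ) : ℝ :=
  ((ϑ + π / 2) * Real.exp 1 + (Real.sin ϑ)⁻¹) / π

noncomputable def dunfordIntegral {F : Type*} [NormedAddCommGroup F] [NormedSpace ℂ F]
    (ϑ t : ℝ) (f : ℝ → F) : F :=
  (2 * (π : ℂ) * Complex.I)⁻¹ • ∫ u, dunfordKernel ϑ t u • f u

section DunfordIntegral

variable {F G : Type*} [NormedAddCommGroup F] [NormedSpace ℂ F]
  [NormedAddCommGroup G] [NormedSpace ℂ G] {ϑ t C : ℝ}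

theorem dunfordConst_pos (hϑ : ϑ ∈ Ioo 0 π) : 0 < dunfordConst ϑ := by
  have hsin := Real.sin_pos_of_pos_of_lt_pi hϑ.1 hϑ.2
  have hθ : 0 < ϑ + π / 2 := by linarith [hϑ.1, pi_pos]
  unfold dunfordConst
  positivity

theorem integrable_dunfordKernelMajorant_abs (hϑ : ϑ ∈ Ioo 0 π) (ht : 0 < t) :
    Integrable fun u => dunfordKernelMajorant ϑ t |u| :=
  IntegrableOn.integrable_comp_abs (integrableOn_dunfordKernelMajorant hϑ ht)

theorem integral_dunfordKernelMajorant_abs (hϑ : ϑ ∈ Ioo 0 π) (ht : 0 < t) :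
    ∫ u, dunfordKernelMajorant ϑ t |u| = 2 * π * dunfordConst ϑ * t⁻¹ := by
  rw [integral_comp_abs, setIntegral_dunfordKernelMajorant hϑ ht, dunfordConst]
  field_simp

theorem integrable_dunfordKernel (hϑ : ϑ ∈ Ioo 0 π) (ht : 0 < t) :
    Integrable (dunfordKernel ϑ t) := by
  have hθ : 0 ≤ ϑ + π / 2 := by linarith [hϑ.1, pi_pos]
  refine (integrable_dunfordKernelMajorant_abs hϑ ht).mono' ?_
    (ae_of_all _ (norm_dunfordKernel_le (Ioo_subset_Icc_self hϑ) ht))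
  exact ((continuous_contour hθ).measurable.const_mul _ |>.cexp.mul
    measurable_contourDeriv).aestronglyMeasurable

theorem integrable_dunfordKernel_smul_apply {E : Type*} [NormedAddCommGroup E]
    [NormedSpace ℂ E] (hϑ : ϑ ∈ Ioo 0 π) (ht : 0 < t) {R : ℝ → E →L[ℂ] F} (hR : Continuous R)
    (hRC : ∀ u, ‖R u‖ ≤ C) (x : E) :
    Integrable fun u => dunfordKernel ϑ t u • R u x :=
  (integrable_dunfordKernel hϑ ht).smul_bdd (C * ‖x‖)
    (hR.clm_apply continuous_const).aestronglyMeasurable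
    (ae_of_all _ fun u => (R u).le_of_opNorm_le (hRC u) x)

theorem norm_dunfordIntegral_le (hϑ : ϑ ∈ Ioo 0 π) (ht : 0 < t) {f : ℝ → F}
    (hfC : ∀ u, ‖f u‖ ≤ C) :
    ‖dunfordIntegral ϑ t f‖ ≤ dunfordConst ϑ * t⁻¹ * C := by
  have hint : ‖∫ u, dunfordKernel ϑ t u • f u‖ ≤ ∫ u, dunfordKernelMajorant ϑ t |u| * C := by
    refine norm_integral_le_of_norm_le ((integrable_dunfordKernelMajorant_abs hϑ ht).mul_const C)
      (ae_of_all _ fun u => ?_)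
    have hk := norm_dunfordKernel_le (Ioo_subset_Icc_self hϑ) ht u
    rw [norm_smul]
    exact mul_le_mul hk (hfC u) (norm_nonneg _) ((norm_nonneg _).trans hk)
  rw [integral_mul_const, integral_dunfordKernelMajorant_abs hϑ ht] at hint
  have hnorm : ‖(2 * (π : ℂ) * Complex.I)⁻¹‖ = (2 * π)⁻¹ := by
    simp [abs_of_pos pi_pos]
  rw [dunfordIntegral, norm_smul, hnorm]
  calc (2 * π)⁻¹ * ‖∫ u, dunfordKernel ϑ t u • f u‖
      ≤ (2 * π)⁻¹ * (2 * π * dunfordConst ϑ * t⁻¹ * C) := by gcongr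
    _ = dunfordConst ϑ * t⁻¹ * C := by field_simp

theorem dunfordIntegral_sub {f g : ℝ → F} (hf : Integrable (fun u => dunfordKernel ϑ t u • f u))
    (hg : Integrable (fun u => dunfordKernel ϑ t u • g u)) :
    dunfordIntegral ϑ t f - dunfordIntegral ϑ t g = dunfordIntegral ϑ t (fun u => f u - g u) := by
  simp only [dunfordIntegral, ← smul_sub, ← integral_sub hf hg]

theorem ContinuousLinearMap.map_dunfordIntegral [CompleteSpace F] [CompleteSpace G]
    (L : F →L[ℂ] G) {f : ℝ → F} (hf : Integrable (fun u => dunfordKernel ϑ t u • f u)) :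
    L (dunfordIntegral ϑ t f) = dunfordIntegral ϑ t (fun u => L (f u)) := by
  simp only [dunfordIntegral, map_smul, ← L.integral_comp_comm hf]

theorem opNorm_le_of_eq_dunfordIntegral {E : Type*} [NormedAddCommGroup E] [NormedSpace ℂ E]
    (hϑ : ϑ ∈ Ioo 0 π) (ht : 0 < t) {S : E →L[ℂ] F} {R : ℝ → E →L[ℂ] F}
    (hS : ∀ x, S x = dunfordIntegral ϑ t (fun u => R u x)) (hR : ∀ u, ‖R u‖ ≤ C) :
    ‖S‖ ≤ dunfordConst ϑ * t⁻¹ * C := by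
  have hC : 0 ≤ C := (norm_nonneg _).trans (hR 0)
  refine S.opNorm_le_bound (by have := dunfordConst_pos hϑ; positivity) fun x => ?_
  rw [hS, mul_assoc _ C]
  exact norm_dunfordIntegral_le hϑ ht fun u => (R u).le_of_opNorm_le (hR u) x

end DunfordIntegral

namespace SectorialResolvent

variable {E₀ E₁ : Type*} [NormedAddCommGroup E₀] [NormedSpace ℂ E₀]
  [NormedAddCommGroup E₁] [NormedSpace ℂ E₁]
  {i A B : E₁ →L[ℂ] E₀} {R RA RB : ℂ → E₀ →L[ℂ] E₁} {ϑ c₀ : ℝ} {z w : ℂ}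

theorem sub_eq_comp (hA : SectorialResolvent i A RA ϑ c₀) (hB : SectorialResolvent i B RB ϑ c₀)
    (hz : z ∈ closedSector ϑ) :
    RA z - RB z = (RA z).comp ((A - B).comp (RB z)) := by
  obtain ⟨-, hA_left, -, -⟩ := hA z hz
  obtain ⟨hB_right, -, -, -⟩ := hB z hz
  calc RA z - RB z
      = (RA z).comp ((z • i - B).comp (RB z)) - ((RA z).comp (z • i - A)).comp (RB z) := by
        rw [hB_right, hA_left, ContinuousLinearMap.comp_id, ContinuousLinearMap.id_comp]
    _ = (RA z).comp ((A - B).comp (RB z)) := by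
        rw [ContinuousLinearMap.comp_assoc, ← ContinuousLinearMap.comp_sub,
          ← ContinuousLinearMap.sub_comp, sub_sub_sub_cancel_left]

theorem sub_eq_smul_comp (hR : SectorialResolvent i A R ϑ c₀) (hz : z ∈ closedSector ϑ)
    (hw : w ∈ closedSector ϑ) :
    R z - R w = (w - z) • (R z).comp (i.comp (R w)) := by
  rw [← ContinuousLinearMap.comp_smul, ← ContinuousLinearMap.smul_comp, sub_smul,
    ← sub_sub_sub_cancel_right (w • i) (z • i) A, ContinuousLinearMap.sub_comp,
    ContinuousLinearMap.comp_sub, (hR w hw).1, ← ContinuousLinearMap.comp_assoc, (hR z hz).2.1,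
    ContinuousLinearMap.comp_id, ContinuousLinearMap.id_comp]

theorem norm_le (hR : SectorialResolvent i A R ϑ c₀) (hz : z ∈ closedSector ϑ) : ‖R z‖ ≤ c₀ :=
  (hR z hz).2.2.2

theorem nonneg (hR : SectorialResolvent i A R ϑ c₀) : 0 ≤ c₀ :=
  (norm_nonneg _).trans (hR.norm_le (Or.inl rfl))

theorem norm_incl_comp_le (hR : SectorialResolvent i A R ϑ c₀) (hz : z ∈ closedSector ϑ) :
    ‖i.comp (R z)‖ ≤ c₀ / (1 + ‖z‖) := by
  rw [le_div_iff₀ (by positivity), mul_comm]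
  exact (hR z hz).2.2.1

theorem lipschitzOnWith (hR : SectorialResolvent i A R ϑ c₀) :
    LipschitzOnWith (c₀ ^ 2).toNNReal R (closedSector ϑ) := by
  refine LipschitzOnWith.of_dist_le_mul fun z hz w hw => ?_
  rw [dist_eq_norm, dist_eq_norm, hR.sub_eq_smul_comp hz hw, norm_smul, norm_sub_rev,
    Real.coe_toNNReal _ (by positivity), mul_comm]
  have hiR : ‖i.comp (R w)‖ ≤ c₀ :=
    (hR.norm_incl_comp_le hw).trans (div_le_self hR.nonneg (by simp))
  gcongr
  calc ‖(R z).comp (i.comp (R w))‖ ≤ ‖R z‖ * ‖i.comp (R w)‖ :=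
        ContinuousLinearMap.opNorm_comp_le _ _
    _ ≤ c₀ ^ 2 := by rw [sq]; exact mul_le_mul (hR.norm_le hz) hiR (norm_nonneg _) hR.nonneg

theorem norm_sub_le (hA : SectorialResolvent i A RA ϑ c₀) (hB : SectorialResolvent i B RB ϑ c₀)
    (hz : z ∈ closedSector ϑ) :
    ‖RA z - RB z‖ ≤ c₀ ^ 2 * ‖A - B‖ := by
  rw [hA.sub_eq_comp hB hz]
  calc ‖(RA z).comp ((A - B).comp (RB z))‖ ≤ ‖RA z‖ * (‖A - B‖ * ‖RB z‖) :=
        (ContinuousLinearMap.opNorm_comp_le _ _).trans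
          (by gcongr; exact ContinuousLinearMap.opNorm_comp_le _ _)
    _ ≤ c₀ * (‖A - B‖ * c₀) :=
        mul_le_mul (hA.norm_le hz) (by gcongr; exact hB.norm_le hz) (by positivity) hA.nonneg
    _ = c₀ ^ 2 * ‖A - B‖ := by ring

theorem norm_incl_comp_sub_le (hA : SectorialResolvent i A RA ϑ c₀)
    (hB : SectorialResolvent i B RB ϑ c₀) (hz : z ∈ closedSector ϑ) :
    ‖i.comp (RA z - RB z)‖ ≤ c₀ ^ 2 * ‖A - B‖ / (1 + ‖z‖) := by
  rw [hA.sub_eq_comp hB hz, ← ContinuousLinearMap.comp_assoc]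
  calc ‖(i.comp (RA z)).comp ((A - B).comp (RB z))‖
        ≤ ‖i.comp (RA z)‖ * (‖A - B‖ * ‖RB z‖) :=
        (ContinuousLinearMap.opNorm_comp_le _ _).trans
          (by gcongr; exact ContinuousLinearMap.opNorm_comp_le _ _)
    _ ≤ c₀ / (1 + ‖z‖) * (‖A - B‖ * c₀) :=
        mul_le_mul (hA.norm_incl_comp_le hz) (by gcongr; exact hB.norm_le hz) (by positivity)
          (div_nonneg hA.nonneg (by positivity))
    _ = c₀ ^ 2 * ‖A - B‖ / (1 + ‖z‖) := by ring

theorem continuous_comp_contour {t : ℝ} (hR : SectorialResolvent i A R ϑ c₀)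
    (hϑ : ϑ ∈ Ioo 0 (π / 2)) (ht : 0 < t) : Continuous fun u => R (contour ϑ t u) :=
  have hθ : 0 ≤ ϑ + π / 2 := by linarith [hϑ.1, pi_pos]
  hR.lipschitzOnWith.continuousOn.comp_continuous (continuous_contour hθ)
    (contour_mem_closedSector hθ hϑ.2 ht)

theorem norm_incl_comp_sub_contour_le {t : ℝ} (hA : SectorialResolvent i A RA ϑ c₀)
    (hB : SectorialResolvent i B RB ϑ c₀) (hϑ : ϑ ∈ Ioo 0 (π / 2)) (ht : 0 < t) (u : ℝ) :
    ‖i.comp (RA (contour ϑ t u) - RB (contour ϑ t u))‖ ≤ t * (c₀ ^ 2 * ‖A - B‖) := by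
  have hθ : 0 ≤ ϑ + π / 2 := by linarith [hϑ.1, pi_pos]
  refine (hA.norm_incl_comp_sub_le hB (contour_mem_closedSector hθ hϑ.2 ht u)).trans ?_
  rw [mul_comm t, div_eq_mul_inv]
  gcongr
  exact inv_le_of_inv_le₀ ht
    ((inv_le_norm_contour hθ ht u).trans (le_add_of_nonneg_left zero_le_one))

end SectorialResolvent

theorem IsDunfordSemigroup.sub_apply_eq_dunfordIntegral {E₀ E₁ : Type*}
    [NormedAddCommGroup E₀] [NormedSpace ℂ E₀] [NormedAddCommGroup E₁] [NormedSpace ℂ E₁]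
    [CompleteSpace E₁] {i A B : E₁ →L[ℂ] E₀}
    {RA RB : ℂ → E₀ →L[ℂ] E₁} {SA SB : ℝ → E₀ →L[ℂ] E₁} {ϑ c₀ T t : ℝ}
    (hSA : IsDunfordSemigroup RA SA ϑ T) (hSB : IsDunfordSemigroup RB SB ϑ T)
    (hA : SectorialResolvent i A RA ϑ c₀) (hB : SectorialResolvent i B RB ϑ c₀)
    (hϑ : ϑ ∈ Ioo 0 (π / 2)) (ht : t ∈ Ioc 0 T) (x : E₀) :
    (SA t - SB t) x
      = dunfordIntegral ϑ t fun u => (RA (contour ϑ t u) - RB (contour ϑ t u)) x := by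
  have hθ : 0 ≤ ϑ + π / 2 := by linarith [hϑ.1, pi_pos]
  have hϑπ : ϑ ∈ Ioo 0 π := ⟨hϑ.1, by linarith [hϑ.2, pi_pos]⟩
  have hmem := contour_mem_closedSector hθ hϑ.2 ht.1
  rw [sub_apply, hSA t ht x, hSB t ht x]
  exact dunfordIntegral_sub
    (integrable_dunfordKernel_smul_apply hϑπ ht.1 (hA.continuous_comp_contour hϑ ht.1)
      (fun u => hA.norm_le (hmem u)) x)
    (integrable_dunfordKernel_smul_apply hϑπ ht.1 (hB.continuous_comp_contour hϑ ht.1)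
      (fun u => hB.norm_le (hmem u)) x)

theorem stmt4_general
    {E₀ E₁ : Type*} [NormedAddCommGroup E₀] [NormedSpace ℂ E₀] [CompleteSpace E₀]
    [NormedAddCommGroup E₁] [NormedSpace ℂ E₁] [CompleteSpace E₁]
    (i : E₁ →L[ℂ] E₀) (ϑ c₀ T : ℝ)
    (hϑ : ϑ ∈ Set.Ioo 0 (Real.pi / 2)) (hc₀ : 0 < c₀) :
    ∃ M > 0, ∀ (A B : E₁ →L[ℂ] E₀) (RA RB : ℂ → E₀ →L[ℂ] E₁)
      (SA₁ SB₁ : ℝ → E₀ →L[ℂ] E₁),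
      SectorialResolvent i A RA ϑ c₀ →
      SectorialResolvent i B RB ϑ c₀ →
      IsDunfordSemigroup RA SA₁ ϑ T →
      IsDunfordSemigroup RB SB₁ ϑ T →
      ∀ t ∈ Set.Ioc (0:ℝ) T,
        ‖i.comp (SA₁ t - SB₁ t)‖ ≤ M * ‖A - B‖ ∧
        t * ‖SA₁ t - SB₁ t‖ ≤ M * ‖A - B‖ := by
  have hϑπ : ϑ ∈ Ioo 0 π := ⟨hϑ.1, by linarith [hϑ.2, pi_pos]⟩
  have hθ : 0 ≤ ϑ + π / 2 := by linarith [hϑ.1, pi_pos]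
  refine ⟨dunfordConst ϑ * c₀ ^ 2, by have := dunfordConst_pos hϑπ; positivity, ?_⟩
  intro A B RA RB SA SB hA hB hSA hSB t ht
  have ht₀ : 0 < t := ht.1
  set D : ℝ → E₀ →L[ℂ] E₁ := fun u => RA (contour ϑ t u) - RB (contour ϑ t u)
  have hD_cont : Continuous D :=
    (hA.continuous_comp_contour hϑ ht₀).sub (hB.continuous_comp_contour hϑ ht₀)
  have hD : ∀ u, ‖D u‖ ≤ c₀ ^ 2 * ‖A - B‖ := fun u =>
    hA.norm_sub_le hB (contour_mem_closedSector hθ hϑ.2 ht₀ u)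
  have hS : ∀ x, (SA t - SB t) x = dunfordIntegral ϑ t fun u => D u x :=
    hSA.sub_apply_eq_dunfordIntegral hSB hA hB hϑ ht
  have hiS : ∀ x, i.comp (SA t - SB t) x = dunfordIntegral ϑ t fun u => i.comp (D u) x :=
    fun x => by
      rw [ContinuousLinearMap.comp_apply, hS,
        i.map_dunfordIntegral (integrable_dunfordKernel_smul_apply hϑπ ht₀ hD_cont hD x)]
      rfl
  constructor
  · calc ‖i.comp (SA t - SB t)‖ ≤ dunfordConst ϑ * t⁻¹ * (t * (c₀ ^ 2 * ‖A - B‖)) :=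
          opNorm_le_of_eq_dunfordIntegral hϑπ ht₀ hiS
            (hA.norm_incl_comp_sub_contour_le hB hϑ ht₀)
      _ = dunfordConst ϑ * c₀ ^ 2 * ‖A - B‖ := by field_simp
  · calc t * ‖SA t - SB t‖ ≤ t * (dunfordConst ϑ * t⁻¹ * (c₀ ^ 2 * ‖A - B‖)) :=
          mul_le_mul_of_nonneg_left (opNorm_le_of_eq_dunfordIntegral hϑπ ht₀ hS hD) ht₀.le
      _ = dunfordConst ϑ * c₀ ^ 2 * ‖A - B‖ := by field_simp

/-- Difference estimate for analytic semigroups: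
`t^j ‖e^{tA} - e^{tB}‖_{L(E₀,E_j)} ≤ M ‖A - B‖_{L(E₁,E₀)}`, `j = 0,1`,
with `M` depending only on `c₀, ϑ, T`. -/
theorem stmt4
    {E₀ E₁ : Type*} [NormedAddCommGroup E₀] [NormedSpace ℂ E₀] [CompleteSpace E₀]
    [NormedAddCommGroup E₁] [NormedSpace ℂ E₁] [CompleteSpace E₁]
    (i : E₁ →L[ℂ] E₀) (ϑ c₀ T : ℝ)
    (hϑ : ϑ ∈ Set.Ioo 0 (Real.pi / 2)) (hc₀ : 0 < c₀) (hT : 0 < T) :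
    ∃ M > 0, ∀ (A B : E₁ →L[ℂ] E₀) (RA RB : ℂ → E₀ →L[ℂ] E₁)
      (SA₁ SB₁ : ℝ → E₀ →L[ℂ] E₁),
      SectorialResolvent i A RA ϑ c₀ →
      SectorialResolvent i B RB ϑ c₀ →
      IsDunfordSemigroup RA SA₁ ϑ T →
      IsDunfordSemigroup RB SB₁ ϑ T →
      ∀ t ∈ Set.Ioc (0:ℝ) T,
        ‖i.comp (SA₁ t - SB₁ t)‖ ≤ M * ‖A - B‖ ∧
        t * ‖SA₁ t - SB₁ t‖ ≤ M * ‖A - B‖ :=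
  stmt4_general i ϑ c₀ T hϑ hc₀
end

section
/- Let E₀, E₁ be Banach spaces with E₁ continuously embedded in E₀, and suppose A, B : [0,T] → L(E₁,E₀) are ρ-Hölder continuous (ρ ∈ (0,1)) with Hölder norms bounded by η, such that the semigroup difference estimate ‖e^{τA(s)} - e^{τB(s)}‖_{L(E₀,E₁)} ≤ M τ^{-1} ‖A(s) - B(s)‖_{L(E₁,E₀)} and the uniform bound τ ‖e^{τA(s)}‖_{L(E₀,E₁)} ≤ c₁ hold for τ ∈ (0,T], s ∈ [0,T]. Then the kernels k_A(t,s) = [A(t)-A(s)] e^{(t-s)A(s)} and k_B(t,s) = [B(t)-B(s)] e^{(t-s)B(s)} satisfy ‖k_A(t,s) - k_B(t,s)‖_{L(E₀)} ≤ ℓ₀ (t-s)^{ρ-1} ‖A-B‖_{C^ρ([0,T],L(E₁,E₀))} for 0 ≤ s < t ≤ T, with ℓ₀ depending only on c₁, M, η. -/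
open Set

/-- Lipschitz estimate for the kernels `k_A(t,s) = [A(t)-A(s)] e^{(t-s)A(s)}` with respect
to `A`, in terms of the Hölder norm of `A - B`: there is `ℓ₀ > 0` depending only on
`c₁, M, η` with `‖k_A(t,s) - k_B(t,s)‖ ≤ ℓ₀ (t-s)^{ρ-1} ‖A-B‖_{C^ρ}`. -/
theorem stmt9
    {E₀ E₁ : Type*} [NormedAddCommGroup E₀] [NormedSpace ℝ E₀] [CompleteSpace E₀]
    [NormedAddCommGroup E₁] [NormedSpace ℝ E₁] [CompleteSpace E₁]
    (i : E₁ →L[ℝ] E₀)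
    (T ρ η c₁ M : ℝ) (hT : 0 < T) (hρ : ρ ∈ Set.Ioo (0:ℝ) 1)
    (hη : 0 < η) (hc₁ : 0 < c₁) (hM : 0 < M) :
    ∃ ℓ₀ > 0, ∀ (A B : ℝ → E₁ →L[ℝ] E₀) (SA SB : ℝ → ℝ → E₀ →L[ℝ] E₁) (N : ℝ),
      -- `A`, `B` are ρ-Hölder continuous with Hölder seminorms bounded by `η`
      (∀ s ∈ Set.Icc (0:ℝ) T, ∀ t ∈ Set.Icc (0:ℝ) T,
        ‖A t - A s‖ ≤ η * |t - s| ^ ρ ∧ ‖B t - B s‖ ≤ η * |t - s| ^ ρ) →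
      -- semigroup difference estimate `‖e^{τA(s)} - e^{τB(s)}‖_{L(E₀,E₁)} ≤ M τ⁻¹ ‖A(s)-B(s)‖`
      (∀ s ∈ Set.Icc (0:ℝ) T, ∀ τ ∈ Set.Ioc (0:ℝ) T,
        ‖SA s τ - SB s τ‖ ≤ M * τ⁻¹ * ‖A s - B s‖) →
      -- uniform bound `τ ‖e^{τA(s)}‖_{L(E₀,E₁)} ≤ c₁`
      (∀ s ∈ Set.Icc (0:ℝ) T, ∀ τ ∈ Set.Ioc (0:ℝ) T,
        τ * ‖SA s τ‖ ≤ c₁ ∧ τ * ‖SB s τ‖ ≤ c₁) →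
      -- `N` bounds the `C^ρ([0,T], L(E₁,E₀))` norm of `A - B`
      (∀ t ∈ Set.Icc (0:ℝ) T, ‖A t - B t‖ ≤ N) →
      (∀ s ∈ Set.Icc (0:ℝ) T, ∀ t ∈ Set.Icc (0:ℝ) T,
        ‖A t - B t - (A s - B s)‖ ≤ N * |t - s| ^ ρ) →
      ∀ s t : ℝ, 0 ≤ s → s < t → t ≤ T →
        ‖(A t - A s).comp (SA s (t - s)) - (B t - B s).comp (SB s (t - s))‖ ≤
          ℓ₀ * (t - s) ^ (ρ - 1) * N := by
  refine ⟨c₁ + η * M, by positivity, ?_⟩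
  intro A B SA SB N hHol hdiff hbd hN0 hNρ s t hs hst htT
  set τ := t - s with hτdef
  have hτ : 0 < τ := sub_pos.mpr hst
  have hsI : s ∈ Set.Icc (0:ℝ) T := ⟨hs, le_trans (le_of_lt hst) htT⟩
  have htI : t ∈ Set.Icc (0:ℝ) T := ⟨le_trans hs (le_of_lt hst), htT⟩
  have hτI : τ ∈ Set.Ioc (0:ℝ) T := ⟨hτ, by simp only [hτdef]; linarith⟩
  have hN : 0 ≤ N := le_trans (norm_nonneg _) (hN0 0 ⟨le_refl _, le_of_lt hT⟩)
  have habs : |t - s| = τ := abs_of_pos hτ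
  -- key decomposition
  have hdecomp : (A t - A s).comp (SA s τ) - (B t - B s).comp (SB s τ)
      = ((A t - B t) - (A s - B s)).comp (SA s τ)
        + (B t - B s).comp (SA s τ - SB s τ) := by
    ext x; simp [ContinuousLinearMap.comp_apply]; abel
  have hSA : ‖SA s τ‖ ≤ c₁ * τ⁻¹ := by
    have h := (hbd s hsI τ hτI).1
    rw [mul_comm] at h
    have := (le_div_iff₀ hτ).mpr h
    rwa [div_eq_mul_inv] at this
  have h1 : ‖(((A t - B t) - (A s - B s)).comp (SA s τ))‖ ≤ c₁ * τ ^ (ρ - 1) * N := by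
    calc ‖(((A t - B t) - (A s - B s)).comp (SA s τ))‖
        ≤ ‖(A t - B t) - (A s - B s)‖ * ‖SA s τ‖ := ContinuousLinearMap.opNorm_comp_le _ _
      _ ≤ (N * τ ^ ρ) * (c₁ * τ⁻¹) := by
          apply mul_le_mul _ hSA (norm_nonneg _) (by positivity)
          have := hNρ s hsI t htI
          rwa [habs] at this
      _ = c₁ * τ ^ (ρ - 1) * N := by
          rw [Real.rpow_sub hτ, Real.rpow_one]; ring
  have h2 : ‖(B t - B s).comp (SA s τ - SB s τ)‖ ≤ η * M * τ ^ (ρ - 1) * N := by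
    calc ‖(B t - B s).comp (SA s τ - SB s τ)‖
        ≤ ‖B t - B s‖ * ‖SA s τ - SB s τ‖ := ContinuousLinearMap.opNorm_comp_le _ _
      _ ≤ (η * τ ^ ρ) * (M * τ⁻¹ * N) := by
          apply mul_le_mul
          · have := (hHol s hsI t htI).2; rwa [habs] at this
          · refine le_trans (hdiff s hsI τ hτI) ?_
            have : ‖A s - B s‖ ≤ N := hN0 s hsI
            have hMτ : 0 ≤ M * τ⁻¹ := by positivity
            exact mul_le_mul_of_nonneg_left this hMτ
          · exact norm_nonneg _
          · positivity
      _ = η * M * τ ^ (ρ - 1) * N := by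
          rw [Real.rpow_sub hτ, Real.rpow_one]; ring
  calc ‖(A t - A s).comp (SA s τ) - (B t - B s).comp (SB s τ)‖
      = ‖((A t - B t) - (A s - B s)).comp (SA s τ)
          + (B t - B s).comp (SA s τ - SB s τ)‖ := by rw [hdecomp]
    _ ≤ ‖((A t - B t) - (A s - B s)).comp (SA s τ)‖
          + ‖(B t - B s).comp (SA s τ - SB s τ)‖ := norm_add_le _ _
    _ ≤ c₁ * τ ^ (ρ - 1) * N + η * M * τ ^ (ρ - 1) * N := add_le_add h1 h2
    _ = (c₁ + η * M) * τ ^ (ρ - 1) * N := by ring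
end
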